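/- arXiv:2303.06963 — 4 statements merged into one kernel-verified Lean document; each statement's English description precedes it below -/
import Mathlib

section
/- For two McNaughton functions f, g : [0,1]^k → [0,1] whose restrictions to a rational polyhedron P ⊆ [0,1]^k satisfy O(g) ∩ P ⊆ O(f) ∩ P (onesets restricted to P), there exists n ∈ ℕ such that g|_P ⊙ ⋯ ⊙ g|_P (n times) ≤ f|_P pointwise, where x⊙y = max(0, x+y−1). -/
/-! Refine the polytopes making up `P` by the hyperplanes on which two affine pieces of `f`, or two
of `g`, agree. Every cell is again the convex hull of finitely many points, any two pieces are
comparable on it, and continuity then forces `f` and `g` to be single affine maps on the cell. For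
affine maps, `1 - f ≤ c * (1 - g)` on a polytope follows from the same inequality at its vertices,
where it holds for large `c` because `g = 1` forces `f = 1`. With `n` above all these constants,
the `n`-th ⊙-power of `g` is `max 0 (1 - n * (1 - g)) ≤ f`. -/

open Set

/-- The unit cube [0,1]^k. -/
def unitCube (k : ℕ) : Set (Fin k → ℝ) := {x | ∀ i, x i ∈ Icc (0:ℝ) 1}

/-- A McNaughton function on [0,1]^k: continuous, with values in [0,1], and
piecewise (affine) linear with integer coefficients. -/
def IsMcNaughton {k : ℕ} (f : (Fin k → ℝ) → ℝ) : Prop :=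
  ContinuousOn f (unitCube k) ∧
  (∀ x ∈ unitCube k, f x ∈ Icc (0:ℝ) 1) ∧
  ∃ (m : ℕ) (a : Fin m → Fin k → ℤ) (b : Fin m → ℤ),
    ∀ x ∈ unitCube k, ∃ j : Fin m, f x = (∑ i, (a j i : ℝ) * x i) + (b j : ℝ)

/-- A rational polyhedron: a finite union of convex hulls of finitely many
rational points. -/
def IsRationalPolyhedron {k : ℕ} (P : Set (Fin k → ℝ)) : Prop :=
  ∃ (m : ℕ) (V : Fin m → Finset (Fin k → ℚ)),
    P = ⋃ j : Fin m, convexHull ℝ ((fun q : Fin k → ℚ => fun i => (q i : ℝ)) '' ↑(V j))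

/-- The n-fold ⊙-power: opow r n = r⊙⋯⊙r (n+... ) with opow r 0 = 1,
opow r (n+1) = (opow r n) ⊙ r, where x⊙y = max(0, x+y−1). -/
noncomputable def opow (r : ℝ) : ℕ → ℝ
  | 0 => 1
  | n + 1 => max 0 (opow r n + r - 1)


open Filter

section Polytope

variable {E : Type*} [AddCommGroup E] [Module ℝ E]

def IsPolyhedron (P : Set E) : Prop :=
  ∃ 𝒮 : Set (Finset E), 𝒮.Finite ∧ P = ⋃ S ∈ 𝒮, convexHull ℝ (S : Set E)

def IsPiecewiseAffineOn (φ : E → ℝ) (P : Set E) : Prop :=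
  ∃ L : Finset (E →ᵃ[ℝ] ℝ), ∀ x ∈ P, ∃ l ∈ L, φ x = l x

theorem IsPiecewiseAffineOn.mono {φ : E → ℝ} {P Q : Set E} (hφ : IsPiecewiseAffineOn φ Q)
    (hPQ : P ⊆ Q) : IsPiecewiseAffineOn φ P :=
  hφ.imp fun _ hL x hx => hL x (hPQ hx)

theorem IsPiecewiseAffineOn.const_sub {φ : E → ℝ} {P : Set E} (hφ : IsPiecewiseAffineOn φ P)
    (a : ℝ) : IsPiecewiseAffineOn (fun x => a - φ x) P := by
  classical
  obtain ⟨L, hL⟩ := hφ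
  refine ⟨L.image (AffineMap.const ℝ E a - ·), fun x hx => ?_⟩
  obtain ⟨l, hl, hlx⟩ := hL x hx
  exact ⟨_, Finset.mem_image_of_mem _ hl, by simp [hlx]⟩

theorem convex_setOf_le_affine (φ ψ : E →ᵃ[ℝ] ℝ) : Convex ℝ {x | φ x ≤ ψ x} := by
  have h : {x | φ x ≤ ψ x} = (φ - ψ) ⁻¹' Iic 0 := by ext; simp
  exact h ▸ (convex_Iic 0).affine_preimage (φ - ψ)

theorem convex_setOf_lt_affine (φ ψ : E →ᵃ[ℝ] ℝ) : Convex ℝ {x | φ x < ψ x} := by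
  have h : {x | φ x < ψ x} = (φ - ψ) ⁻¹' Iio 0 := by ext; simp
  exact h ▸ (convex_Iio 0).affine_preimage (φ - ψ)

theorem AffineMap.apply_sum_smul (φ : E →ᵃ[ℝ] ℝ) {ι : Type*} {S : Finset ι} {w : ι → ℝ}
    (z : ι → E) (hw : ∑ i ∈ S, w i = 1) : φ (∑ i ∈ S, w i • z i) = ∑ i ∈ S, w i * φ (z i) := by
  rw [← S.affineCombination_eq_linear_combination z w hw, S.map_affineCombination z w hw,
    S.affineCombination_eq_linear_combination _ w hw]
  rfl

/-- The point where the line through `u` and `v` meets the hyperplane `φ = 0`, in a form symmetric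
in `u` and `v`. It is junk (equal to `0`) when `φ u = φ v`. -/
noncomputable def crossPoint (φ : E →ᵃ[ℝ] ℝ) (u v : E) : E :=
  (φ v - φ u)⁻¹ • (φ v • u - φ u • v)

theorem crossPoint_comm (φ : E →ᵃ[ℝ] ℝ) (u v : E) : crossPoint φ u v = crossPoint φ v u := by
  rw [crossPoint, crossPoint, ← neg_sub (φ u), inv_neg]
  module

theorem crossPoint_neg (φ : E →ᵃ[ℝ] ℝ) (u v : E) : crossPoint (-φ) u v = crossPoint φ u v := by
  simp only [crossPoint, AffineMap.coe_neg, Pi.neg_apply, sub_neg_eq_add]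
  rw [neg_add_eq_sub, ← neg_sub (φ u), inv_neg]
  module

theorem crossPoint_eq_lineMap (φ : E →ᵃ[ℝ] ℝ) {u v : E} (h : φ u ≠ φ v) :
    crossPoint φ u v = AffineMap.lineMap u v (φ u / (φ u - φ v)) := by
  have h' : φ v - φ u ≠ 0 := sub_ne_zero.2 h.symm
  rw [AffineMap.lineMap_apply_module, crossPoint, show φ u - φ v = -(φ v - φ u) by ring,
    div_neg, sub_neg_eq_add, one_add_div h']
  module

theorem apply_crossPoint (φ : E →ᵃ[ℝ] ℝ) {u v : E} (h : φ u ≠ φ v) :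
    φ (crossPoint φ u v) = 0 := by
  have h' : φ u - φ v ≠ 0 := sub_ne_zero.2 h
  rw [crossPoint_eq_lineMap φ h, AffineMap.apply_lineMap, AffineMap.lineMap_apply_ring']
  field_simp
  ring

theorem crossPoint_mem_segment {φ : E →ᵃ[ℝ] ℝ} {u v : E} (hu : φ u ≤ 0) (hv : 0 < φ v) :
    crossPoint φ u v ∈ segment ℝ u v := by
  have hd : 0 < φ v - φ u := by linarith
  rw [crossPoint_eq_lineMap φ (by linarith), segment_eq_image_lineMap, ← neg_div_neg_eq, neg_sub]
  exact mem_image_of_mem _ ⟨div_nonneg (by linarith) hd.le, div_le_one_of_le₀ (by linarith) hd.le⟩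

theorem mem_segment_crossPoint {φ : E →ᵃ[ℝ] ℝ} {x y z : E} (hx : x ∈ segment ℝ y z)
    (hxφ : φ x ≤ 0) (hy : φ y ≤ 0) (hz : 0 < φ z) : x ∈ segment ℝ y (crossPoint φ y z) := by
  rw [segment_eq_image_lineMap] at hx ⊢
  obtain ⟨t, ⟨ht0, -⟩, rfl⟩ := hx
  have hd : 0 < φ z - φ y := by linarith
  rw [crossPoint_eq_lineMap φ (by linarith), ← neg_div_neg_eq, neg_sub]
  set t' := -φ y / (φ z - φ y)
  have htt' : t ≤ t' := by
    rw [AffineMap.apply_lineMap, AffineMap.lineMap_apply_ring'] at hxφ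
    rw [le_div_iff₀ hd]; linarith
  refine ⟨t / t', ⟨div_nonneg ht0 (ht0.trans htt'), div_le_one_of_le₀ htt' (ht0.trans htt')⟩, ?_⟩
  rw [AffineMap.lineMap_lineMap_right, div_mul_cancel_of_imp fun h => le_antisymm (h ▸ htt') ht0]

/-- `crossPoint φ · p` is the central projection from `p` onto `φ = 0`: it sends the convex
combination `y = ∑ w u • u` to the combination of the `crossPoint φ u p` with weights
`w u * (φ p - φ u) / (φ p - φ y)`. -/
theorem crossPoint_mem_convexHull_image {φ : E →ᵃ[ℝ] ℝ} {S : Finset E} {p y : E}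
    (hS : ∀ u ∈ S, φ u < φ p) (hy : y ∈ convexHull ℝ (S : Set E)) :
    crossPoint φ y p ∈ convexHull ℝ ((crossPoint φ · p) '' S) := by
  have hD : 0 < φ p - φ y :=
    sub_pos.2 (convexHull_min hS (convex_setOf_lt_affine φ (AffineMap.const ℝ E (φ p))) hy)
  obtain ⟨w, hw0, hw1, rfl⟩ := Finset.mem_convexHull'.1 hy
  have hφy := φ.apply_sum_smul (fun u => u) hw1
  rw [hφy] at hD
  set D := φ p - ∑ u ∈ S, w u * φ u
  have hw'1 : ∑ u ∈ S, w u * (φ p - φ u) / D = 1 := by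
    rw [← Finset.sum_div, div_eq_one_iff_eq hD.ne']
    simp only [D, mul_sub, Finset.sum_sub_distrib, ← Finset.sum_mul, hw1, one_mul]
  have hterm : ∀ u ∈ S, (w u * (φ p - φ u) / D) • crossPoint φ u p
      = (w u / D) • (φ p • u - φ u • p) := by
    intro u hu
    rw [crossPoint, smul_smul]
    congr 1
    field_simp [(sub_pos.2 (hS u hu)).ne']
  have hc : ∑ u ∈ S, (w u * (φ p - φ u) / D) • crossPoint φ u p =
      crossPoint φ (∑ u ∈ S, w u • u) p := by
    rw [Finset.sum_congr rfl hterm, crossPoint, hφy]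
    simp only [smul_sub, Finset.sum_sub_distrib, Finset.smul_sum, Finset.sum_smul, smul_smul]
    congr 1 <;> refine Finset.sum_congr rfl fun u _ => ?_ <;> congr 1 <;> ring
  rw [← hc, ← Finset.centerMass_eq_of_sum_1 _ _ hw'1]
  refine Finset.centerMass_mem_convexHull S (fun u hu => ?_) (by rw [hw'1]; exact one_pos)
    (fun u hu => mem_image_of_mem _ hu)
  exact div_nonneg (mul_nonneg (hw0 u hu) (sub_pos.2 (hS u hu)).le) hD.le

theorem crossPoint_mem_convexHull_image₂ {φ : E →ᵃ[ℝ] ℝ} {A B : Finset E}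
    (hA : ∀ u ∈ A, φ u ≤ 0) (hB : ∀ v ∈ B, 0 < φ v) {y z : E}
    (hy : y ∈ convexHull ℝ (A : Set E)) (hz : z ∈ convexHull ℝ (B : Set E)) :
    crossPoint φ y z ∈ convexHull ℝ (image2 (crossPoint φ) A B) := by
  have hproj : (crossPoint φ · z) '' A ⊆ convexHull ℝ (image2 (crossPoint φ) A B) := by
    rintro _ ⟨u, hu, rfl⟩
    dsimp only
    have hBu : ∀ v ∈ B, (-φ) v < (-φ) u := fun v hv => by
      simp only [AffineMap.coe_neg, Pi.neg_apply, neg_lt_neg_iff]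
      exact (hA u hu).trans_lt (hB v hv)
    rw [crossPoint_comm, ← crossPoint_neg]
    refine convexHull_min ?_ (convex_convexHull ℝ _) (crossPoint_mem_convexHull_image hBu hz)
    rintro _ ⟨v, hv, rfl⟩
    dsimp only
    rw [crossPoint_neg, crossPoint_comm]
    exact subset_convexHull ℝ _ (mem_image2_of_mem hu hv)
  have hz' : 0 < φ z := convexHull_min hB (convex_setOf_lt_affine 0 φ) hz
  exact convexHull_min hproj (convex_convexHull ℝ _)
    (crossPoint_mem_convexHull_image (fun u hu => (hA u hu).trans_lt hz') hy)

/-- A point of `conv s` with `φ ≤ 0` lies on a segment from a point `y` of the hull of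
`A = {φ ≤ 0}` to a point `z` of the hull of `B = {φ > 0}`, hence between `y` and
`crossPoint φ y z`. -/
theorem exists_convexHull_eq_inter_setOf_nonpos (φ : E →ᵃ[ℝ] ℝ) (s : Finset E) :
    ∃ T : Finset E, convexHull ℝ (T : Set E) = convexHull ℝ ↑s ∩ {x | φ x ≤ 0} := by
  classical
  set A := s.filter (φ · ≤ 0)
  set B := s.filter (0 < φ ·)
  have hA : ∀ u ∈ A, φ u ≤ 0 := fun u hu => (Finset.mem_filter.1 hu).2
  have hB : ∀ v ∈ B, 0 < φ v := fun v hv => (Finset.mem_filter.1 hv).2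
  have hconv : Convex ℝ (convexHull ℝ ↑s ∩ {x | φ x ≤ 0}) :=
    (convex_convexHull ℝ _).inter (convex_setOf_le_affine φ 0)
  refine ⟨A ∪ Finset.image₂ (crossPoint φ) A B, (convexHull_min ?_ hconv).antisymm ?_⟩
  · rintro v hv
    rw [Finset.coe_union, Finset.coe_image₂] at hv
    rcases hv with hvA | ⟨u, hu, w, hw, rfl⟩
    · exact ⟨subset_convexHull ℝ _ (Finset.filter_subset _ _ hvA), hA v hvA⟩
    · exact ⟨(convex_convexHull ℝ _).segment_subset
        (subset_convexHull ℝ _ (Finset.filter_subset _ _ hu))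
        (subset_convexHull ℝ _ (Finset.filter_subset _ _ hw))
        (crossPoint_mem_segment (hA u hu) (hB w hw)),
        (apply_crossPoint φ ((hA u hu).trans_lt (hB w hw)).ne).le⟩
  · rintro x ⟨hx, hxφ⟩
    rw [Finset.coe_union, Finset.coe_image₂]
    have hs : (s : Set E) = ↑A ∪ ↑B := by
      ext v
      simp only [A, B, Finset.coe_filter, mem_union, mem_ofPred_eq, ← and_or_left, le_or_gt,
        and_true, Finset.mem_coe]
    have hAφ : ∀ y ∈ convexHull ℝ (A : Set E), φ y ≤ 0 :=
      convexHull_min hA (convex_setOf_le_affine φ 0)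
    have hBφ : ∀ z ∈ convexHull ℝ (B : Set E), 0 < φ z :=
      convexHull_min hB (convex_setOf_lt_affine 0 φ)
    rcases B.eq_empty_or_nonempty with hB0 | hBne
    · rw [hs, hB0, Finset.coe_empty, union_empty] at hx
      exact convexHull_mono subset_union_left hx
    rcases A.eq_empty_or_nonempty with hA0 | hAne
    · rw [hs, hA0, Finset.coe_empty, empty_union] at hx
      exact absurd hxφ (hBφ x hx).not_ge
    rw [hs, convexHull_union hAne.to_set hBne.to_set] at hx
    obtain ⟨y, hy, z, hz, hxyz⟩ := mem_convexJoin.1 hx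
    exact (convex_convexHull ℝ _).segment_subset (convexHull_mono subset_union_left hy)
      (convexHull_mono subset_union_right (crossPoint_mem_convexHull_image₂ hA hB hy hz))
      (mem_segment_crossPoint hxyz hxφ (hAφ y hy) (hBφ z hz))

theorem exists_refinement_comparable (D : Finset ((E →ᵃ[ℝ] ℝ) × (E →ᵃ[ℝ] ℝ)))
    {𝒮 : Set (Finset E)} (h𝒮 : 𝒮.Finite) :
    ∃ 𝒯 : Set (Finset E), 𝒯.Finite ∧
      ⋃ T ∈ 𝒯, convexHull ℝ (T : Set E) = ⋃ S ∈ 𝒮, convexHull ℝ (S : Set E) ∧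
      ∀ T ∈ 𝒯, ∀ p ∈ D, (∀ x ∈ convexHull ℝ (T : Set E), p.1 x ≤ p.2 x) ∨
        (∀ x ∈ convexHull ℝ (T : Set E), p.2 x ≤ p.1 x) := by
  classical
  induction D using Finset.induction_on with
  | empty => exact ⟨𝒮, h𝒮, rfl, by simp⟩
  | insert p D _ ih =>
    obtain ⟨𝒯, h𝒯, hcover, hcomp⟩ := ih
    choose cut hcut using exists_convexHull_eq_inter_setOf_nonpos (E := E)
    refine ⟨cut (p.1 - p.2) '' 𝒯 ∪ cut (p.2 - p.1) '' 𝒯, (h𝒯.image _).union (h𝒯.image _), ?_, ?_⟩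
    · rw [← hcover, biUnion_union, biUnion_image, biUnion_image]
      simp_rw [← iUnion_union_distrib]
      refine iUnion₂_congr fun T _ => ?_
      rw [hcut, hcut, ← inter_union_distrib_left]
      convert inter_univ _
      ext x
      simpa using le_total _ _
    · rintro _ (⟨T, hT, rfl⟩ | ⟨T, hT, rfl⟩) q hq <;> rw [hcut] <;>
        rcases Finset.mem_insert.1 hq with rfl | hq
      · exact .inl fun x hx => by simpa using hx.2
      · exact (hcomp T hT q hq).imp (fun h x hx => h x hx.1) (fun h x hx => h x hx.1)
      · exact .inr fun x hx => by simpa using hx.2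
      · exact (hcomp T hT q hq).imp (fun h x hx => h x hx.1) (fun h x hx => h x hx.1)

theorem eventually_forall_convexHull_le_mul {T : Finset E} {φ ψ : E →ᵃ[ℝ] ℝ}
    (hψ : ∀ v ∈ T, 0 ≤ ψ v) (hφ : ∀ v ∈ T, ψ v = 0 → φ v ≤ 0) :
    ∀ᶠ c in atTop, ∀ x ∈ convexHull ℝ (T : Set E), φ x ≤ c * ψ x := by
  have hvert : ∀ v ∈ T, ∀ᶠ c in atTop, φ v ≤ c * ψ v := by
    intro v hv
    rcases (hψ v hv).eq_or_lt with h | h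
    · exact .of_forall fun c => by rw [← h, mul_zero]; exact hφ v hv h.symm
    · filter_upwards [eventually_ge_atTop (φ v / ψ v)] with c hc using (div_le_iff₀ h).1 hc
  filter_upwards [(Finset.eventually_all T).2 hvert] with c hc
  exact convexHull_min hc (convex_setOf_le_affine φ (c • ψ))

theorem Convex.exists_forall_pos_of_nonneg {ι : Type*} {C : Set E} (hC : Convex ℝ C)
    (hne : C.Nonempty) (s : Finset ι) (d : ι → E →ᵃ[ℝ] ℝ) (h0 : ∀ i ∈ s, ∀ x ∈ C, 0 ≤ d i x)
    (hpos : ∀ i ∈ s, ∃ x ∈ C, 0 < d i x) : ∃ y ∈ C, ∀ i ∈ s, 0 < d i y := by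
  classical
  induction s using Finset.induction_on with
  | empty => exact hne.imp fun x hx => ⟨hx, by simp⟩
  | insert i s _ ih =>
    obtain ⟨y, hy, hys⟩ := ih (fun j hj => h0 j (Finset.mem_insert_of_mem hj))
      (fun j hj => hpos j (Finset.mem_insert_of_mem hj))
    obtain ⟨z, hz, hiz⟩ := hpos i (Finset.mem_insert_self i s)
    refine ⟨(1 / 2 : ℝ) • y + (1 / 2 : ℝ) • z, hC hy hz (by norm_num) (by norm_num) (by norm_num),
      fun j hj => ?_⟩
    rw [Convex.combo_affine_apply (by norm_num), smul_eq_mul, smul_eq_mul]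
    rcases Finset.mem_insert.1 hj with rfl | hj
    · linarith [h0 j (Finset.mem_insert_self _ _) y hy]
    · linarith [h0 j (Finset.mem_insert_of_mem hj) z hz, hys j hj]

def genericPart (C : Set E) (L : Finset (E →ᵃ[ℝ] ℝ)) : Set E :=
  {x ∈ C | ∀ l ∈ L, ∀ l' ∈ L, (∀ z ∈ C, l z ≤ l' z) → ¬ EqOn l l' C → l x < l' x}

theorem Convex.nonempty_genericPart {C : Set E} (hC : Convex ℝ C) (hne : C.Nonempty)
    (L : Finset (E →ᵃ[ℝ] ℝ)) : (genericPart C L).Nonempty := by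
  classical
  obtain ⟨y, hyC, hy⟩ := hC.exists_forall_pos_of_nonneg hne
    ((L ×ˢ L).filter fun q => (∀ x ∈ C, q.1 x ≤ q.2 x) ∧ ¬ EqOn q.1 q.2 C) (fun q => q.2 - q.1)
    (fun q hq x hx => by simpa using (Finset.mem_filter.1 hq).2.1 x hx)
    (fun q hq => by
      obtain ⟨-, hle, hne⟩ := Finset.mem_filter.1 hq
      obtain ⟨x, hx, hlx⟩ := not_forall₂.1 hne
      exact ⟨x, hx, by simpa using (hle x hx).lt_of_ne hlx⟩)
  refine ⟨y, hyC, fun l hl l' hl' hle hne => ?_⟩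
  simpa using hy (l, l') (Finset.mem_filter.2 ⟨Finset.mem_product.2 ⟨hl, hl'⟩, hle, hne⟩)

theorem Convex.combo_mem_genericPart {C : Set E} (hC : Convex ℝ C) {L : Finset (E →ᵃ[ℝ] ℝ)}
    {x z : E} (hx : x ∈ C) (hz : z ∈ genericPart C L) {a b : ℝ} (ha : 0 ≤ a) (hb : 0 < b)
    (hab : a + b = 1) : a • x + b • z ∈ genericPart C L := by
  refine ⟨hC hx hz.1 ha hb.le hab, fun l hl l' hl' hle hne => ?_⟩
  simp only [Convex.combo_affine_apply hab, smul_eq_mul]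
  exact add_lt_add_of_le_of_lt (mul_le_mul_of_nonneg_left (hle x hx) ha)
    (mul_lt_mul_of_pos_left (hz.2 l hl l' hl' hle hne) hb)

theorem Convex.convex_genericPart {C : Set E} (hC : Convex ℝ C) (L : Finset (E →ᵃ[ℝ] ℝ)) :
    Convex ℝ (genericPart C L) := by
  intro x hx z hz a b ha hb hab
  rcases hb.eq_or_lt with rfl | hb
  · simpa [show a = 1 by linarith] using hx
  · exact hC.combo_mem_genericPart hx.1 hz ha hb hab

theorem eqOn_of_mem_genericPart {C : Set E} {L : Finset (E →ᵃ[ℝ] ℝ)}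
    (hord : ∀ l ∈ L, ∀ l' ∈ L, (∀ x ∈ C, l x ≤ l' x) ∨ (∀ x ∈ C, l' x ≤ l x))
    {x : E} (hx : x ∈ genericPart C L) {l l' : E →ᵃ[ℝ] ℝ} (hl : l ∈ L) (hl' : l' ∈ L)
    (heq : l x = l' x) : EqOn l l' C := by
  by_contra hne
  rcases hord l hl l' hl' with hle | hle
  · exact (hx.2 l hl l' hl' hle hne).ne heq
  · exact (hx.2 l' hl' l hl hle fun h => hne h.symm).ne heq.symm

end Polytope

theorem IsPreconnected.eqOn_of_forall_exists_eq {X ι : Type*} [TopologicalSpace X] {U : Set X}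
    (hU : IsPreconnected U) {s : Finset ι} {F : ι → X → ℝ} {φ : X → ℝ} (hφ : ContinuousOn φ U)
    (hF : ∀ i ∈ s, ContinuousOn (F i) U) (hsel : ∀ x ∈ U, ∃ i ∈ s, φ x = F i x)
    (hsep : ∀ x ∈ U, ∀ i ∈ s, ∀ j ∈ s, F i x = F j x → EqOn (F i) (F j) U)
    {x₀ : X} (hx₀ : x₀ ∈ U) {i₀ : ι} (hi₀ : i₀ ∈ s) (h₀ : φ x₀ = F i₀ x₀) :
    EqOn φ (F i₀) U := by
  classical
  have := Subtype.preconnectedSpace hU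
  have hclosed : ∀ i ∈ s, IsClosed {x : U | φ x = F i x} := fun i hi =>
    isClosed_eq (f := U.domRestrict φ) (g := U.domRestrict (F i)) hφ.domRestrict
      (hF i hi).domRestrict
  have hcompl : {x : U | φ x = F i₀ x}ᶜ =
      ⋃ i ∈ s.filter (fun i => ¬ EqOn (F i) (F i₀) U), {x : U | φ x = F i x} := by
    ext x
    simp only [mem_compl_iff, mem_ofPred_eq, mem_iUnion, Finset.mem_filter, exists_prop]
    constructor
    · intro hx
      obtain ⟨i, hi, hxi⟩ := hsel x x.2
      exact ⟨i, ⟨hi, fun h => hx (hxi.trans (h x.2))⟩, hxi⟩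
    · rintro ⟨i, ⟨hi, hne⟩, hxi⟩ hx₀'
      exact hne (hsep x x.2 i hi i₀ hi₀ (hxi.symm.trans hx₀'))
  have hclopen : IsClopen {x : U | φ x = F i₀ x} :=
    ⟨hclosed i₀ hi₀, isClosed_compl_iff.1 (hcompl ▸ (isClosed_biUnion_finset fun i hi =>
      hclosed i (Finset.mem_filter.1 hi).1))⟩
  exact fun x hx => eq_univ_iff_forall.1 (hclopen.eq_univ ⟨⟨x₀, hx₀⟩, h₀⟩) ⟨x, hx⟩

section Selection

variable {E : Type*} [AddCommGroup E] [Module ℝ E] [TopologicalSpace E] [ContinuousAdd E]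
  [ContinuousSMul ℝ E]

theorem Convex.subset_closure_genericPart {C : Set E} (hC : Convex ℝ C) (hne : C.Nonempty)
    (L : Finset (E →ᵃ[ℝ] ℝ)) : C ⊆ closure (genericPart C L) := by
  obtain ⟨y, hy⟩ := hC.nonempty_genericPart hne L
  intro x hx
  refine closure_mono ?_ (segment_subset_closure_openSegment (left_mem_segment ℝ x y))
  rintro _ ⟨a, b, ha, hb, hab, rfl⟩
  exact hC.combo_mem_genericPart hx hy ha.le hb hab

/-- Continuity forces the piece on `genericPart C L`, where distinct pieces never meet, to be
locally constant; `genericPart C L` is connected and dense in `C`. -/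
theorem Convex.exists_eqOn_of_forall_exists_eq {C : Set E} (hC : Convex ℝ C) (hne : C.Nonempty)
    {L : Finset (E →ᵃ[ℝ] ℝ)} (hLc : ∀ l ∈ L, Continuous l)
    (hord : ∀ l ∈ L, ∀ l' ∈ L, (∀ x ∈ C, l x ≤ l' x) ∨ (∀ x ∈ C, l' x ≤ l x))
    {φ : E → ℝ} (hφ : ContinuousOn φ C) (hsel : ∀ x ∈ C, ∃ l ∈ L, φ x = l x) :
    ∃ l ∈ L, EqOn φ l C := by
  have hUC : genericPart C L ⊆ C := fun x hx => hx.1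
  obtain ⟨y, hy⟩ := hC.nonempty_genericPart hne L
  obtain ⟨l₀, hl₀, h₀⟩ := hsel y hy.1
  have hU : EqOn φ l₀ (genericPart C L) :=
    (hC.convex_genericPart L).isPreconnected.eqOn_of_forall_exists_eq
      (F := fun l : E →ᵃ[ℝ] ℝ => (l : E → ℝ)) (hφ.mono hUC) (fun l hl => (hLc l hl).continuousOn)
      (fun x hx => hsel x hx.1)
      (fun x hx l hl l' hl' heq => (eqOn_of_mem_genericPart hord hx hl hl' heq).mono hUC) hy hl₀ h₀
  exact ⟨l₀, hl₀, hU.of_subset_closure hφ (hLc l₀ hl₀).continuousOn hUC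
    (hC.subset_closure_genericPart hne L)⟩

end Selection

theorem IsPolyhedron.eventually_le_mul {E : Type*} [NormedAddCommGroup E] [NormedSpace ℝ E]
    [FiniteDimensional ℝ E] {P : Set E} (hP : IsPolyhedron P)
    {φ ψ : E → ℝ} (hφc : ContinuousOn φ P) (hψc : ContinuousOn ψ P)
    (hφ : IsPiecewiseAffineOn φ P) (hψ : IsPiecewiseAffineOn ψ P)
    (hψ0 : ∀ x ∈ P, 0 ≤ ψ x) (hzero : ∀ x ∈ P, ψ x = 0 → φ x ≤ 0) :
    ∀ᶠ c in atTop, ∀ x ∈ P, φ x ≤ c * ψ x := by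
  classical
  obtain ⟨𝒮, h𝒮, hP⟩ := hP
  obtain ⟨Lφ, hLφ⟩ := hφ
  obtain ⟨Lψ, hLψ⟩ := hψ
  obtain ⟨𝒯, h𝒯, hcover, hcomp⟩ := exists_refinement_comparable (Lφ ×ˢ Lφ ∪ Lψ ×ˢ Lψ) h𝒮
  rw [← hcover] at hP
  suffices h : ∀ T ∈ 𝒯, ∀ᶠ c in atTop, ∀ x ∈ convexHull ℝ (T : Set E), φ x ≤ c * ψ x by
    filter_upwards [h𝒯.eventually_all.2 h] with c hc x hx
    obtain ⟨T, hT, hxT⟩ := mem_iUnion₂.1 (hP ▸ hx)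
    exact hc T hT x hxT
  intro T hT
  have hTP : convexHull ℝ (T : Set E) ⊆ P :=
    hP ▸ subset_biUnion_of_mem (u := fun T : Finset E => convexHull ℝ (T : Set E)) hT
  rcases T.eq_empty_or_nonempty with rfl | hTne
  · simp
  have hpiece : ∀ {χ : E → ℝ} {L : Finset (E →ᵃ[ℝ] ℝ)}, L ×ˢ L ⊆ Lφ ×ˢ Lφ ∪ Lψ ×ˢ Lψ →
      ContinuousOn χ P → (∀ x ∈ P, ∃ l ∈ L, χ x = l x) →
      ∃ l ∈ L, EqOn χ l (convexHull ℝ (T : Set E)) := fun hL hχc hχ =>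
    (convex_convexHull ℝ _).exists_eqOn_of_forall_exists_eq hTne.to_set.convexHull
      (fun l _ => l.continuous_of_finiteDimensional)
      (fun l hl l' hl' => hcomp T hT (l, l') (hL (Finset.mem_product.2 ⟨hl, hl'⟩)))
      (hχc.mono hTP) (fun x hx => hχ x (hTP hx))
  obtain ⟨lφ, -, hlφ⟩ := hpiece Finset.subset_union_left hφc hLφ
  obtain ⟨lψ, -, hlψ⟩ := hpiece Finset.subset_union_right hψc hLψ
  have hTv : ∀ v ∈ T, v ∈ convexHull ℝ (T : Set E) := fun v hv => subset_convexHull ℝ _ hv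
  filter_upwards [eventually_forall_convexHull_le_mul (φ := lφ) (ψ := lψ)
    (fun v hv => hlψ (hTv v hv) ▸ hψ0 v (hTP (hTv v hv)))
    (fun v hv h => hlφ (hTv v hv) ▸ hzero v (hTP (hTv v hv)) (hlψ (hTv v hv) ▸ h))]
    with c hc x hx
  rw [hlφ hx, hlψ hx]
  exact hc x hx

theorem opow_eq_max {r : ℝ} (hr : r ≤ 1) (n : ℕ) : opow r n = max 0 (1 - n * (1 - r)) := by
  induction n with
  | zero => simp [opow]
  | succ n ih =>
    rw [opow, ih, Nat.cast_succ]
    rcases le_total 0 (1 - n * (1 - r)) with h | h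
    · rw [max_eq_right h]; ring_nf
    · rw [max_eq_left h, max_eq_left (by linarith), max_eq_left (by nlinarith)]

theorem IsRationalPolyhedron.isPolyhedron {k : ℕ} {P : Set (Fin k → ℝ)}
    (hP : IsRationalPolyhedron P) : IsPolyhedron P := by
  classical
  obtain ⟨m, V, rfl⟩ := hP
  refine ⟨range fun j => (V j).image fun q i => (q i : ℝ), finite_range _, ?_⟩
  simp

theorem IsMcNaughton.isPiecewiseAffineOn {k : ℕ} {f : (Fin k → ℝ) → ℝ} (hf : IsMcNaughton f) :
    IsPiecewiseAffineOn f (unitCube k) := by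
  classical
  obtain ⟨-, -, m, a, b, hab⟩ := hf
  refine ⟨Finset.univ.image fun j => (∑ i, (a j i : ℝ) • LinearMap.proj i).toAffineMap +
    AffineMap.const ℝ _ (b j : ℝ), fun x hx => ?_⟩
  obtain ⟨j, hj⟩ := hab x hx
  exact ⟨_, Finset.mem_image_of_mem _ (Finset.mem_univ j), by simp [hj]⟩

/-- If the onesets restricted to a rational polyhedron P satisfy
O(g) ∩ P ⊆ O(f) ∩ P, then some n-fold ⊙-power of g|_P is pointwise ≤ f|_P. -/
theorem oneset_subset_imp_power_le {k : ℕ} (f g : (Fin k → ℝ) → ℝ)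
    (P : Set (Fin k → ℝ))
    (hf : IsMcNaughton f) (hg : IsMcNaughton g)
    (hP : IsRationalPolyhedron P) (hPc : P ⊆ unitCube k)
    (hone : ∀ x ∈ P, g x = 1 → f x = 1) :
    ∃ n : ℕ, 0 < n ∧ ∀ x ∈ P, opow (g x) n ≤ f x := by
  have hg1 : ∀ x ∈ P, g x ≤ 1 := fun x hx => (hg.2.1 x (hPc hx)).2
  have key : ∀ᶠ c in atTop, ∀ x ∈ P, 1 - f x ≤ c * (1 - g x) :=
    hP.isPolyhedron.eventually_le_mul (continuousOn_const.sub (hf.1.mono hPc))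
      (continuousOn_const.sub (hg.1.mono hPc)) ((hf.isPiecewiseAffineOn.mono hPc).const_sub 1)
      ((hg.isPiecewiseAffineOn.mono hPc).const_sub 1) (fun x hx => sub_nonneg.2 (hg1 x hx))
      (fun x hx h => by rw [hone x hx (by linarith)]; simp)
  obtain ⟨n, hn, hn0⟩ := ((tendsto_natCast_atTop_atTop.eventually key).and
    (eventually_gt_atTop 0)).exists
  refine ⟨n, hn0, fun x hx => ?_⟩
  rw [opow_eq_max (hg1 x hx)]
  exact max_le (hf.2.1 x (hPc hx)).1 (by linarith [hn x hx])
end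

section
/- Every finitely generated quotient of a finitely presented MV-algebra is finitely presented. -/
class MValg (A : Type) where
  oplus : A → A → A
  mvneg : A → A
  mvbot : A
  oplus_assoc : ∀ x y z : A, oplus (oplus x y) z = oplus x (oplus y z)
  oplus_comm : ∀ x y : A, oplus x y = oplus y x
  oplus_bot : ∀ x : A, oplus mvbot x = x
  mvneg_mvneg : ∀ x : A, mvneg (mvneg x) = x
  mv3 : ∀ x y : A, oplus (mvneg (oplus (mvneg x) y)) y = oplus (mvneg (oplus (mvneg y) x)) x

open MValg

def IsMVHom {A B : Type} [MValg A] [MValg B] (h : A → B) : Prop :=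
  (∀ x y : A, h (oplus x y) = oplus (h x) (h y)) ∧
  (∀ x : A, h (mvneg x) = mvneg (h x)) ∧ h mvbot = mvbot

def IsMVCong {A : Type} [MValg A] (r : A → A → Prop) : Prop :=
  Equivalence r ∧ (∀ a b c d : A, r a b → r c d → r (oplus a c) (oplus b d)) ∧
    (∀ a b : A, r a b → r (mvneg a) (mvneg b))

/-- The MV-congruence generated by a set of pairs. -/
def congGen {A : Type} [MValg A] (G : Set (A × A)) : A → A → Prop :=
  fun a b => ∀ r : A → A → Prop, IsMVCong r → (∀ p ∈ G, r p.1 p.2) → r a b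

/-- F is the free MV-algebra on X ⊆ F (universal property). -/
def IsFreeMV (F : Type) [MValg F] (X : Set F) : Prop :=
  ∀ (B : Type) [MValg B], ∀ f : X → B,
    ∃! h : F → B, IsMVHom h ∧ ∀ x : X, h x = f x

/-- A witnesses a finite presentation through the free algebra F. -/
def PresWitness (F : Type) [MValg F] (A : Type) [MValg A] : Prop :=
  ∃ (X : Set F) (q : F → A) (G : Set (F × F)),
    X.Finite ∧ IsFreeMV F X ∧ G.Finite ∧ IsMVHom q ∧ Function.Surjective q ∧
    ∀ a b : F, q a = q b ↔ congGen G a b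

/-- A finitely presented MV-algebra: a quotient of a finitely generated free
MV-algebra by a finitely generated congruence. -/
def FinPresented (A : Type) [MValg A] : Prop :=
  ∃ (F : Type) (iF : MValg F), @PresWitness F iF A inferInstance

lemma congGen_isCong {A : Type} [MValg A] (G : Set (A × A)) : IsMVCong (congGen G) := by
  refine ⟨⟨fun a t ht hG => ht.1.refl a,
    fun h t ht hG => ht.1.symm (h t ht hG),
    fun h1 h2 t ht hG => ht.1.trans (h1 t ht hG) (h2 t ht hG)⟩,
    fun a b c d h1 h2 t ht hG => ht.2.1 a b c d (h1 t ht hG) (h2 t ht hG),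
    fun a b h t ht hG => ht.2.2 a b (h t ht hG)⟩

lemma congGen_of_mem {A : Type} [MValg A] {G : Set (A × A)} {p : A × A} (hp : p ∈ G) :
    congGen G p.1 p.2 := fun _ _ hG => hG p hp

lemma congGen_mono {A : Type} [MValg A] {G H : Set (A × A)} (h : G ⊆ H) {a b : A}
    (hab : congGen G a b) : congGen H a b :=
  fun t ht hH => hab t ht (fun p hp => hH p (h hp))

/-- Every finitely generated quotient of a finitely presented MV-algebra is
finitely presented. -/
theorem fin_gen_quotient_of_fin_presented_is_fin_presented
    (A : Type) [MValg A] (hA : FinPresented A)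
    (r : A → A → Prop) (hr : IsMVCong r)
    (G : Set (A × A)) (hG : G.Finite) (hgen : r = congGen G)
    (B : Type) [MValg B] (q : A → B) (hq : IsMVHom q)
    (hsurj : Function.Surjective q) (hker : ∀ a b : A, q a = q b ↔ r a b) :
    FinPresented B := by
  obtain ⟨F, iF, X, q₀, G₀, hXfin, hfree, hG₀fin, hq₀hom, hq₀surj, hker₀⟩ := hA
  classical
  set pick : A → F := fun a => Classical.choose (hq₀surj a) with hpickdef
  have hpick : ∀ a, q₀ (pick a) = a := fun a => Classical.choose_spec (hq₀surj a)
  set G' : Set (F × F) := (fun p : A × A => (pick p.1, pick p.2)) '' G with hG'def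
  have hkerq₀ : ∀ a b : F, q₀ a = q₀ b → congGen (G₀ ∪ G') a b := by
    intro a b h
    exact congGen_mono (Set.subset_union_left) ((hker₀ a b).mp h)
  refine ⟨F, iF, X, q ∘ q₀, G₀ ∪ G', hXfin, hfree, hG₀fin.union (hG.image _),
    ⟨fun x y => by simp [hq₀hom.1, hq.1], fun x => by simp [hq₀hom.2.1, hq.2.1],
      by simp [hq₀hom.2.2, hq.2.2]⟩,
    hsurj.comp hq₀surj, ?_⟩
  intro a b
  constructor
  · intro h
    -- q (q₀ a) = q (q₀ b), so congGen G (q₀ a) (q₀ b)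
    have hAB : congGen G (q₀ a) (q₀ b) := by
      have := (hker (q₀ a) (q₀ b)).mp h
      rwa [hgen] at this
    -- the pushed-forward relation
    set s : A → A → Prop := fun x y =>
      ∃ u v : F, q₀ u = x ∧ q₀ v = y ∧ congGen (G₀ ∪ G') u v with hsdef
    have hscong : IsMVCong s := by
      constructor
      · constructor
        · intro x
          exact ⟨pick x, pick x, hpick x, hpick x, (congGen_isCong _).1.refl _⟩
        · rintro x y ⟨u, v, hu, hv, huv⟩
          exact ⟨v, u, hv, hu, (congGen_isCong _).1.symm huv⟩
        · rintro x y z ⟨u, v, hu, hv, huv⟩ ⟨u', v', hu', hv', huv'⟩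
          refine ⟨u, v', hu, hv', ?_⟩
          have hvv' : congGen (G₀ ∪ G') v u' := hkerq₀ v u' (by rw [hv, hu'])
          exact (congGen_isCong _).1.trans huv ((congGen_isCong _).1.trans hvv' huv')
      · constructor
        · rintro x y z w ⟨u, v, hu, hv, huv⟩ ⟨u', v', hu', hv', huv'⟩
          refine ⟨oplus u u', oplus v v', ?_, ?_, (congGen_isCong _).2.1 _ _ _ _ huv huv'⟩
          · rw [hq₀hom.1, hu, hu']
          · rw [hq₀hom.1, hv, hv']
        · rintro x y ⟨u, v, hu, hv, huv⟩
          refine ⟨mvneg u, mvneg v, ?_, ?_, (congGen_isCong _).2.2 _ _ huv⟩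
          · rw [hq₀hom.2.1, hu]
          · rw [hq₀hom.2.1, hv]
    have hsG : ∀ p ∈ G, s p.1 p.2 := by
      intro p hp
      exact ⟨pick p.1, pick p.2, hpick _, hpick _,
        congGen_of_mem (G := G₀ ∪ G') (Set.mem_union_right _ ⟨p, hp, rfl⟩)⟩
    obtain ⟨u, v, hu, hv, huv⟩ := hAB s hscong hsG
    have h1 : congGen (G₀ ∪ G') a u := hkerq₀ a u (by rw [hu])
    have h2 : congGen (G₀ ∪ G') v b := hkerq₀ v b (by rw [hv])
    exact (congGen_isCong _).1.trans h1 ((congGen_isCong _).1.trans huv h2)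
  · intro h
    refine h (fun x y => q (q₀ x) = q (q₀ y))
      ⟨⟨fun _ => rfl, fun h => h.symm, fun h1 h2 => h1.trans h2⟩,
        fun a b c d h1 h2 => by show q (q₀ (oplus a c)) = q (q₀ (oplus b d)); simp only at h1 h2; rw [hq₀hom.1, hq₀hom.1, hq.1, hq.1, h1, h2],
        fun a b h1 => by show q (q₀ (mvneg a)) = q (q₀ (mvneg b)); simp only at h1; rw [hq₀hom.2.1, hq₀hom.2.1, hq.2.1, hq.2.1, h1]⟩ ?_
    intro p hp
    rcases hp with hp | hp
    · have : q₀ p.1 = q₀ p.2 := (hker₀ p.1 p.2).mpr (congGen_of_mem hp)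
      rw [this]
    · obtain ⟨x, hx, hxp⟩ := hp
      have hr : r x.1 x.2 := by rw [hgen]; exact congGen_of_mem hx
      have : q x.1 = q x.2 := (hker x.1 x.2).mpr hr
      rw [← hxp]
      simpa [hpick] using this
end

section
/- For every finitely presented MV-algebra A ≅ M(P) with P ⊆ [0,1]^k a rational polyhedron, the homomorphisms from A to the standard MV-algebra [0,1] are in bijection with the points of P: each point p ∈ P gives the evaluation homomorphism f ↦ f(p), and every homomorphism arises this way from a unique point. -/
open Set

def McN (k : ℕ) : Type := {f : (Fin k → ℝ) → ℝ // IsMcNaughton f}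

/-- A homomorphism from M(P) to the standard MV-algebra [0,1], described on
representatives: a map on McNaughton functions, landing in [0,1], invariant
under agreement on P, preserving ⊥, ¬ and ⊕ (computed pointwise on P). -/
def IsHomToI {k : ℕ} (P : Set (Fin k → ℝ)) (h : McN k → ℝ) : Prop :=
  (∀ f : McN k, h f ∈ Icc (0:ℝ) 1) ∧
  (∀ f g : McN k, Set.EqOn f.1 g.1 P → h f = h g) ∧
  (∀ u : McN k, (∀ x ∈ P, u.1 x = 0) → h u = 0) ∧
  (∀ f u : McN k, (∀ x ∈ P, u.1 x = 1 - f.1 x) → h u = 1 - h f) ∧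
  (∀ f g u : McN k, (∀ x ∈ P, u.1 x = min 1 (f.1 x + g.1 x)) → h u = min 1 (h f + h g))

/-! Evaluation at a point of `P` is a homomorphism, and the coordinate projections separate
points. Conversely, let `h` be a homomorphism. The zero sets in `P` of the members of its kernel are
closed in the compact set `P`, directed (`Z (f ⊕ g) ⊆ Z f ∩ Z g`) and nonempty: a kernel element
positive on `P` is bounded below there by some `c > 0`, and the truncation of `2 ^ n * f` with
`2 ^ n * c > 1` equals `1` on `P` while `h` sends it to `0`. So they share a point `q`. If
`h f < f q`, a dyadic `m / 2 ^ n` separates them, and the truncation of `2 ^ n * f - m`, which is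
built from `f` by `⊕` and `¬` alone, lies in the kernel but is positive at `q`; applied to `f` and
`¬f` this gives `h f = f q`. -/

noncomputable def clip (t : ℝ) : ℝ := max 0 (min 1 t)

lemma clip_of_mem_Icc {t : ℝ} (ht : t ∈ Icc (0:ℝ) 1) : clip t = t := by
  simp [clip, ht.1, ht.2]

lemma clip_of_nonpos {t : ℝ} (ht : t ≤ 0) : clip t = 0 := by
  simp [clip, ht]

lemma clip_of_one_le {t : ℝ} (ht : 1 ≤ t) : clip t = 1 := by
  simp [clip, ht]

lemma clip_pos {t : ℝ} (ht : 0 < t) : 0 < clip t := by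
  simp [clip, ht]

lemma min_one_clip_add_clip (t : ℝ) : min 1 (clip t + clip t) = clip (2 * t) := by
  simp only [clip]; grind

lemma one_sub_min_one_sub_clip_add_one_sub_clip (t : ℝ) :
    1 - min 1 ((1 - clip t) + (1 - clip t)) = clip (2 * t - 1) := by
  simp only [clip]; grind

def intAffine {k : ℕ} (p : (Fin k → ℤ) × ℤ) (x : Fin k → ℝ) : ℝ :=
  ∑ i, (p.1 i : ℝ) * x i + p.2

lemma intAffine_add {k : ℕ} (p q : (Fin k → ℤ) × ℤ) (x : Fin k → ℝ) :
    intAffine (p + q) x = intAffine p x + intAffine q x := by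
  simp only [intAffine, Prod.fst_add, Prod.snd_add, Pi.add_apply, Int.cast_add, add_mul,
    Finset.sum_add_distrib]
  ring

lemma intAffine_sub {k : ℕ} (p q : (Fin k → ℤ) × ℤ) (x : Fin k → ℝ) :
    intAffine (p - q) x = intAffine p x - intAffine q x := by
  simp only [intAffine, Prod.fst_sub, Prod.snd_sub, Pi.sub_apply, Int.cast_sub, sub_mul,
    Finset.sum_sub_distrib]
  ring

lemma intAffine_const {k : ℕ} (b : ℤ) (x : Fin k → ℝ) : intAffine (0, b) x = b := by
  simp [intAffine]

lemma isMcNaughton_iff {k : ℕ} {f : (Fin k → ℝ) → ℝ} :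
    IsMcNaughton f ↔ ContinuousOn f (unitCube k) ∧ (∀ x ∈ unitCube k, f x ∈ Icc (0:ℝ) 1) ∧
      ∃ S : Set ((Fin k → ℤ) × ℤ), S.Finite ∧
        ∀ x ∈ unitCube k, ∃ p ∈ S, f x = intAffine p x := by
  constructor
  · rintro ⟨hc, hr, m, a, b, hab⟩
    refine ⟨hc, hr, range fun j => (a j, b j), finite_range _, fun x hx => ?_⟩
    obtain ⟨j, hj⟩ := hab x hx
    exact ⟨_, mem_range_self j, hj⟩
  · rintro ⟨hc, hr, S, hS, hfS⟩
    obtain ⟨m, e, rfl⟩ := hS.fin_embedding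
    refine ⟨hc, hr, m, fun j => (e j).1, fun j => (e j).2, fun x hx => ?_⟩
    obtain ⟨_, ⟨j, rfl⟩, hj⟩ := hfS x hx
    exact ⟨j, hj⟩

namespace McN

open scoped Pointwise

variable {k : ℕ}

def zero : McN k :=
  ⟨fun _ => 0, isMcNaughton_iff.2 ⟨continuousOn_const, fun _ _ => by simp,
    {0}, finite_singleton _, fun x _ => ⟨0, rfl, by simp [intAffine]⟩⟩⟩

def proj (i : Fin k) : McN k :=
  ⟨fun x => x i, isMcNaughton_iff.2 ⟨(continuous_apply i).continuousOn, fun x hx => hx i,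
    {(Pi.single i 1, 0)}, finite_singleton _,
    fun x _ => ⟨_, rfl, by simp [intAffine, Pi.single_apply]⟩⟩⟩

def neg (f : McN k) : McN k :=
  ⟨fun x => 1 - f.1 x, by
    obtain ⟨hc, hr, S, hS, hfS⟩ := isMcNaughton_iff.1 f.2
    refine isMcNaughton_iff.2 ⟨continuousOn_const.sub hc,
      fun x hx => ⟨sub_nonneg.2 (hr x hx).2, sub_le_self _ (hr x hx).1⟩,
      (fun p => (0, 1) - p) '' S, hS.image _, fun x hx => ?_⟩
    obtain ⟨p, hp, hfp⟩ := hfS x hx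
    refine ⟨_, mem_image_of_mem _ hp, ?_⟩
    rw [intAffine_sub, intAffine_const, hfp, Int.cast_one]⟩

def oplus (f g : McN k) : McN k :=
  ⟨fun x => min 1 (f.1 x + g.1 x), by
    obtain ⟨hfc, hfr, S, hS, hfS⟩ := isMcNaughton_iff.1 f.2
    obtain ⟨hgc, hgr, T, hT, hgT⟩ := isMcNaughton_iff.1 g.2
    refine isMcNaughton_iff.2 ⟨continuousOn_const.inf (hfc.add hgc),
      fun x hx => ⟨le_min zero_le_one (add_nonneg (hfr x hx).1 (hgr x hx).1), min_le_left _ _⟩,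
      insert (0, 1) (S + T), (hS.add hT).insert _, fun x hx => ?_⟩
    rcases le_total 1 (f.1 x + g.1 x) with hle | hle
    · exact ⟨_, mem_insert _ _, by rw [min_eq_left hle, intAffine_const, Int.cast_one]⟩
    · obtain ⟨p, hp, hfp⟩ := hfS x hx
      obtain ⟨q, hq, hgq⟩ := hgT x hx
      exact ⟨p + q, mem_insert_of_mem _ (Set.add_mem_add hp hq),
        by rw [min_eq_right hle, intAffine_add, hfp, hgq]⟩⟩

lemma eq_of_forall_apply_eq {p q : Fin k → ℝ} (h : ∀ f : McN k, f.1 p = f.1 q) : p = q :=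
  funext fun i => h (proj i)

lemma eq_zero_and_eq_zero_of_oplus_eq_zero {f g : McN k} {x : Fin k → ℝ}
    (hx : x ∈ unitCube k) (h : (oplus f g).1 x = 0) : f.1 x = 0 ∧ g.1 x = 0 := by
  have hf := (f.2.2.1 x hx).1
  have hg := (g.2.2.1 x hx).1
  change min 1 (f.1 x + g.1 x) = 0 at h
  have hsum := ((min_eq_iff.1 h).resolve_left fun h1 => one_ne_zero h1.1).1
  constructor <;> linarith

/-- For `m < 2 ^ n` this is `clip (2 ^ n * f - m)` (see `IsNegOplusHom.map_dyadic`): each binary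
digit of `m`, read from the last, is undone by a doubling `g ⊕ g` or by `¬(¬g ⊕ ¬g)`. -/
def dyadic : ℕ → ℕ → McN k → McN k
  | 0, _, f => f
  | n + 1, m, f =>
    let g := dyadic n (m / 2) f
    if m % 2 = 0 then oplus g g else neg (oplus (neg g) (neg g))

end McN

lemma IsRationalPolyhedron.isCompact {k : ℕ} {P : Set (Fin k → ℝ)}
    (hP : IsRationalPolyhedron P) : IsCompact P := by
  obtain ⟨m, V, rfl⟩ := hP
  exact isCompact_iUnion fun j => ((V j).finite_toSet.image _).isCompact_convexHull ℝ

structure IsNegOplusHom {k : ℕ} (φ : McN k → ℝ) : Prop where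
  mem_Icc : ∀ f, φ f ∈ Icc (0:ℝ) 1
  map_neg : ∀ f, φ (McN.neg f) = 1 - φ f
  map_oplus : ∀ f g, φ (McN.oplus f g) = min 1 (φ f + φ g)

lemma isNegOplusHom_eval {k : ℕ} {x : Fin k → ℝ} (hx : x ∈ unitCube k) :
    IsNegOplusHom (fun f : McN k => f.1 x) :=
  ⟨fun f => f.2.2.1 x hx, fun _ => rfl, fun _ _ => rfl⟩

lemma IsHomToI.isNegOplusHom {k : ℕ} {P : Set (Fin k → ℝ)} {h : McN k → ℝ}
    (hh : IsHomToI P h) : IsNegOplusHom h :=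
  ⟨hh.1, fun f => hh.2.2.2.1 f _ fun _ _ => rfl, fun f g => hh.2.2.2.2 f g _ fun _ _ => rfl⟩

lemma IsNegOplusHom.map_dyadic {k : ℕ} {φ : McN k → ℝ} (hφ : IsNegOplusHom φ) (f : McN k) :
    ∀ {n m : ℕ}, m < 2 ^ n → φ (McN.dyadic n m f) = clip (2 ^ n * φ f - m)
  | 0, m, hm => by
    obtain rfl : m = 0 := by simpa using hm
    simp [McN.dyadic, clip_of_mem_Icc (hφ.mem_Icc f)]
  | n + 1, m, hm => by
    have ih := hφ.map_dyadic f (n := n) (m := m / 2) (by rw [pow_succ] at hm; omega)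
    rcases Nat.mod_two_eq_zero_or_one m with hm2 | hm2
    · have hm' : (m : ℝ) = 2 * (m / 2 : ℕ) := by exact_mod_cast (by omega : m = 2 * (m / 2))
      simp only [McN.dyadic, hm2, if_true, hφ.map_oplus, ih, min_one_clip_add_clip, hm',
        pow_succ]
      ring_nf
    · have hm' : (m : ℝ) = 2 * (m / 2 : ℕ) + 1 := by
        exact_mod_cast (by omega : m = 2 * (m / 2) + 1)
      simp only [McN.dyadic, hm2, one_ne_zero, if_false, hφ.map_neg, hφ.map_oplus, ih,
        one_sub_min_one_sub_clip_add_one_sub_clip, hm', pow_succ]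
      ring_nf

lemma McN.dyadic_apply {k : ℕ} {x : Fin k → ℝ} (hx : x ∈ unitCube k) (f : McN k) {n m : ℕ}
    (hm : m < 2 ^ n) : (McN.dyadic n m f).1 x = clip (2 ^ n * f.1 x - m) :=
  (isNegOplusHom_eval hx).map_dyadic f hm

lemma exists_pow_mul_le_nat_lt {s t : ℝ} (ht : 0 ≤ t) (hts : t < s) (hs : s ≤ 1) :
    ∃ n m : ℕ, m < 2 ^ n ∧ 2 ^ n * t ≤ m ∧ (m : ℝ) < 2 ^ n * s := by
  obtain ⟨n, hn⟩ := pow_unbounded_of_one_lt (s - t)⁻¹ one_lt_two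
  have hgap : 1 < 2 ^ n * (s - t) := by
    rw [inv_lt_iff_one_lt_mul₀ (sub_pos.2 hts)] at hn; linarith
  set m := ⌈(2:ℝ) ^ n * t⌉₊
  have hm_lt : (m : ℝ) < 2 ^ n * s := by
    have := Nat.ceil_lt_add_one (mul_nonneg (pow_nonneg zero_le_two n) ht)
    linarith
  refine ⟨n, m, ?_, Nat.le_ceil _, hm_lt⟩
  have : (m : ℝ) < (2 ^ n : ℕ) := by
    push_cast
    nlinarith [pow_pos (zero_lt_two (α := ℝ)) n]
  exact_mod_cast this

namespace IsHomToI

variable {k : ℕ} {P : Set (Fin k → ℝ)} {h : McN k → ℝ}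

lemma map_zero (hh : IsHomToI P h) : h McN.zero = 0 :=
  hh.2.2.1 _ fun _ _ => rfl

lemma zeroSet_nonempty (hh : IsHomToI P h) (hPc : P ⊆ unitCube k) (hK : IsCompact P)
    {f : McN k} (hf : h f = 0) : (P ∩ f.1 ⁻¹' {0}).Nonempty := by
  by_contra hempty
  have hpos : ∀ x ∈ P, 0 < f.1 x := fun x hx =>
    (f.2.2.1 x (hPc hx)).1.lt_of_ne' fun h0 => hempty ⟨x, hx, h0⟩
  obtain ⟨c, hc, hcf⟩ := hK.exists_forall_le' (f.2.1.mono hPc) hpos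
  obtain ⟨n, hn⟩ := pow_unbounded_of_one_lt c⁻¹ one_lt_two
  have h2n : 0 < 2 ^ n := pow_pos two_pos n
  have hone : EqOn (McN.dyadic n 0 f).1 (McN.neg McN.zero).1 P := fun x hx => by
    rw [McN.dyadic_apply (hPc hx) f h2n, Nat.cast_zero, sub_zero, clip_of_one_le]
    · simp [McN.neg, McN.zero]
    · rw [inv_lt_iff_one_lt_mul₀ hc] at hn
      nlinarith [hcf x hx, pow_pos (two_pos (α := ℝ)) n]
  have := hh.2.1 _ _ hone
  rw [hh.isNegOplusHom.map_dyadic f h2n, hf, hh.isNegOplusHom.map_neg, hh.map_zero] at this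
  norm_num [clip] at this

lemma exists_common_zero (hh : IsHomToI P h) (hPc : P ⊆ unitCube k) (hK : IsCompact P) :
    ∃ q ∈ P, ∀ f : McN k, h f = 0 → f.1 q = 0 := by
  let Z : {f : McN k // h f = 0} → Set (Fin k → ℝ) := fun f => P ∩ f.1.1 ⁻¹' {0}
  have hclosed : ∀ f, IsClosed (Z f) := fun f =>
    (f.1.2.1.mono hPc).preimage_isClosed_of_isClosed hK.isClosed isClosed_singleton
  have hdir : Directed (· ⊇ ·) Z := fun f g => by
    have hfg : h (McN.oplus f.1 g.1) = 0 := by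
      rw [hh.isNegOplusHom.map_oplus, f.2, g.2]; norm_num
    refine ⟨⟨McN.oplus f.1 g.1, hfg⟩, ?_, ?_⟩ <;>
    · rintro x ⟨hxP, hx⟩
      have := McN.eq_zero_and_eq_zero_of_oplus_eq_zero (hPc hxP) hx
      exact ⟨hxP, by simp [this]⟩
  have : Nonempty {f : McN k // h f = 0} := ⟨⟨McN.zero, hh.map_zero⟩⟩
  obtain ⟨q, hq⟩ := IsCompact.nonempty_iInter_of_directed_nonempty_isCompact_isClosed Z hdir
    (fun f => hh.zeroSet_nonempty hPc hK f.2)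
    (fun f => hK.of_isClosed_subset (hclosed f) inter_subset_left) hclosed
  exact ⟨q, (mem_iInter.1 hq ⟨McN.zero, hh.map_zero⟩).1,
    fun f hf => (mem_iInter.1 hq ⟨f, hf⟩).2⟩

lemma apply_le_of_common_zero (hh : IsHomToI P h) {q : Fin k → ℝ} (hq : q ∈ unitCube k)
    (hzero : ∀ f : McN k, h f = 0 → f.1 q = 0) (f : McN k) : f.1 q ≤ h f := by
  by_contra! hlt
  obtain ⟨n, m, hm, htm, hms⟩ := exists_pow_mul_le_nat_lt (hh.1 f).1 hlt (f.2.2.1 q hq).2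
  have hg : h (McN.dyadic n m f) = 0 := by
    rw [hh.isNegOplusHom.map_dyadic f hm, clip_of_nonpos (by linarith)]
  have := hzero _ hg
  rw [McN.dyadic_apply hq f hm] at this
  exact (clip_pos (by linarith)).ne' this

lemma eq_eval_of_common_zero (hh : IsHomToI P h) {q : Fin k → ℝ} (hq : q ∈ unitCube k)
    (hzero : ∀ f : McN k, h f = 0 → f.1 q = 0) (f : McN k) : h f = f.1 q := by
  have hneg := hh.apply_le_of_common_zero hq hzero (McN.neg f)
  rw [hh.isNegOplusHom.map_neg] at hneg
  change 1 - f.1 q ≤ 1 - h f at hneg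
  exact le_antisymm (by linarith) (hh.apply_le_of_common_zero hq hzero f)

end IsHomToI

lemma isHomToI_eval {k : ℕ} {P : Set (Fin k → ℝ)} (hPc : P ⊆ unitCube k) {p : Fin k → ℝ}
    (hp : p ∈ P) : IsHomToI P (fun f : McN k => f.1 p) :=
  ⟨fun f => f.2.2.1 p (hPc hp), fun _ _ hfg => hfg hp, fun _ hu => hu p hp,
    fun _ _ hu => hu p hp, fun _ _ _ hu => hu p hp⟩

/-- For a finitely presented MV-algebra M(P), P ⊆ [0,1]^k a rational polyhedron,
the homomorphisms M(P) → [0,1] are in bijection with the points of P: every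
point gives the evaluation homomorphism, and every homomorphism is evaluation
at a unique point of P. -/
theorem homs_biject_with_points {k : ℕ} (P : Set (Fin k → ℝ))
    (hP : IsRationalPolyhedron P) (hPc : P ⊆ unitCube k) :
    (∀ p ∈ P, IsHomToI P (fun f : McN k => f.1 p)) ∧
    (∀ h : McN k → ℝ, IsHomToI P h → ∃! p, p ∈ P ∧ ∀ f : McN k, h f = f.1 p) := by
  refine ⟨fun p hp => isHomToI_eval hPc hp, fun h hh => ?_⟩
  obtain ⟨q, hqP, hzero⟩ := hh.exists_common_zero hPc hP.isCompact
  have heval := hh.eq_eval_of_common_zero (hPc hqP) hzero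
  refine ⟨q, ⟨hqP, heval⟩, fun p ⟨_, hp⟩ => McN.eq_of_forall_apply_eq fun f => ?_⟩
  rw [← hp, heval]
end

section
/- The class of coherent MV-algebras has the joint embedding property: for any two coherent MV-algebras A and B there exist a coherent MV-algebra C and embeddings A → C and B → C. -/
open Set

def IsCoherentSet {k : ℕ} (C : Set (Fin k → ℝ)) : Prop :=
  Convex ℝ C ∧ ∃ (n : ℕ) (g : Fin k → (Fin n → ℝ) → ℝ),
    (∀ i, IsMcNaughton (g i)) ∧
    C = convexHull ℝ ((fun x : Fin n → ℝ => fun i : Fin k => g i x) '' unitCube n)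

open MValg

/-- A homomorphism into the standard MV-algebra [0,1]. -/
def IsMVHomToI {F : Type} [MValg F] (h : F → ℝ) : Prop :=
  (∀ a : F, h a ∈ Icc (0:ℝ) 1) ∧ h mvbot = 0 ∧
  (∀ a b : F, h (oplus a b) = min 1 (h a + h b)) ∧
  (∀ a : F, h (mvneg a) = 1 - h a)

/-- A coherent MV-algebra: one isomorphic to Free(k)/C where C ⊆ [0,1]^k is a
coherent set; the congruence associated to C identifies a and b iff every
homomorphism to [0,1] sending the free generators to a point of C identifies
them. -/
def IsCoherentMV (A : Type) [MValg A] : Prop :=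
  ∃ (k : ℕ) (F : Type) (iF : MValg F) (x : Fin k → F) (C : Set (Fin k → ℝ))
    (q : F → A),
    @IsFreeMV F iF (Set.range x) ∧ Function.Injective x ∧ IsCoherentSet C ∧
    @IsMVHom F A iF inferInstance q ∧ Function.Surjective q ∧
    ∀ a b : F, q a = q b ↔
      ∀ h : F → ℝ, @IsMVHomToI F iF h → (fun i => h (x i)) ∈ C → h a = h b

namespace JEP

/-! ### The standard MV-algebra on `[0,1]` -/

abbrev UI := {r : ℝ // r ∈ Set.Icc (0:ℝ) 1}

private lemma trunc_assoc {a b c : ℝ} (ha : 0 ≤ a) (hc : 0 ≤ c) :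
    min 1 (min 1 (a + b) + c) = min 1 (a + min 1 (b + c)) := by
  rcases le_total (a + b) 1 with h | h <;> rcases le_total (b + c) 1 with h' | h' <;>
    simp only [min_def] <;> split_ifs <;> linarith

private lemma trunc_mv3 {a b : ℝ} (ha : a ∈ Set.Icc (0:ℝ) 1) (hb : b ∈ Set.Icc (0:ℝ) 1) :
    min 1 (1 - min 1 (1 - a + b) + b) = min 1 (1 - min 1 (1 - b + a) + a) := by
  obtain ⟨ha0, ha1⟩ := ha; obtain ⟨hb0, hb1⟩ := hb
  rcases le_total (1 - a + b) 1 with h | h <;> rcases le_total (1 - b + a) 1 with h' | h' <;>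
    simp only [min_def] <;> split_ifs <;> linarith

instance : MValg UI where
  oplus a b := ⟨min 1 (a.1 + b.1),
    ⟨le_min zero_le_one (add_nonneg a.2.1 b.2.1), min_le_left _ _⟩⟩
  mvneg a := ⟨1 - a.1, ⟨by linarith [a.2.2], by linarith [a.2.1]⟩⟩
  mvbot := ⟨0, by norm_num⟩
  oplus_assoc x y z := Subtype.ext (trunc_assoc x.2.1 z.2.1)
  oplus_comm x y := Subtype.ext (by simp only; rw [add_comm])
  oplus_bot x := Subtype.ext (by simp only [zero_add]; exact min_eq_right x.2.2)
  mvneg_mvneg x := Subtype.ext (by simp only; ring)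
  mv3 x y := Subtype.ext (trunc_mv3 x.2 y.2)

open MValg

@[simp] lemma UI.oplus_val (a b : UI) : (oplus a b).1 = min 1 (a.1 + b.1) := rfl
@[simp] lemma UI.neg_val (a : UI) : (mvneg a).1 = 1 - a.1 := rfl
@[simp] lemma UI.bot_val : (mvbot : UI).1 = 0 := rfl

instance : MValg Bool where
  oplus := or
  mvneg := not
  mvbot := false
  oplus_assoc := by decide
  oplus_comm := by decide
  oplus_bot := by decide
  mvneg_mvneg := by decide
  mv3 := by decide


/-! ### The free MV-algebra on `N` generators -/

inductive MVTerm (N : ℕ) : Type where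
  | var : Fin N → MVTerm N
  | op : MVTerm N → MVTerm N → MVTerm N
  | ng : MVTerm N → MVTerm N
  | bt : MVTerm N

inductive MVRel (N : ℕ) : MVTerm N → MVTerm N → Prop where
  | refl (t) : MVRel N t t
  | symm {a b} : MVRel N a b → MVRel N b a
  | trans {a b c} : MVRel N a b → MVRel N b c → MVRel N a c
  | opCongr {a a' b b'} : MVRel N a a' → MVRel N b b' → MVRel N (.op a b) (.op a' b')
  | ngCongr {a a'} : MVRel N a a' → MVRel N (.ng a) (.ng a')
  | assoc (a b c) : MVRel N (.op (.op a b) c) (.op a (.op b c))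
  | comm (a b) : MVRel N (.op a b) (.op b a)
  | botl (a) : MVRel N (.op .bt a) a
  | negneg (a) : MVRel N (.ng (.ng a)) a
  | ax3 (a b) : MVRel N (.op (.ng (.op (.ng a) b)) b) (.op (.ng (.op (.ng b) a)) a)

instance mvSetoid (N : ℕ) : Setoid (MVTerm N) :=
  ⟨MVRel N, fun t => MVRel.refl t, MVRel.symm, MVRel.trans⟩

abbrev FreeMV (N : ℕ) : Type := Quotient (mvSetoid N)

def evalT {N : ℕ} {M : Type} [MValg M] (v : Fin N → M) : MVTerm N → M
  | .var i => v i
  | .op a b => oplus (evalT v a) (evalT v b)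
  | .ng a => mvneg (evalT v a)
  | .bt => mvbot

lemma evalT_sound {N : ℕ} {M : Type} [MValg M] (v : Fin N → M) {a b : MVTerm N}
    (h : MVRel N a b) : evalT v a = evalT v b := by
  induction h with
  | refl => rfl
  | symm _ ih => exact ih.symm
  | trans _ _ ih1 ih2 => exact ih1.trans ih2
  | opCongr _ _ ih1 ih2 => simp only [evalT, ih1, ih2]
  | ngCongr _ ih => simp only [evalT, ih]
  | assoc a b c => exact oplus_assoc _ _ _
  | comm a b => exact oplus_comm _ _
  | botl a => exact oplus_bot _
  | negneg a => exact mvneg_mvneg _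
  | ax3 a b => exact mv3 _ _

instance (N : ℕ) : MValg (FreeMV N) where
  oplus := Quotient.lift₂ (fun a b => (⟦MVTerm.op a b⟧ : FreeMV N))
    (fun _ _ _ _ h h' => Quotient.sound (MVRel.opCongr h h'))
  mvneg := Quotient.lift (fun a => (⟦MVTerm.ng a⟧ : FreeMV N))
    (fun _ _ h => Quotient.sound (MVRel.ngCongr h))
  mvbot := ⟦MVTerm.bt⟧
  oplus_assoc := by
    rintro ⟨a⟩ ⟨b⟩ ⟨c⟩; exact Quotient.sound (MVRel.assoc a b c)
  oplus_comm := by rintro ⟨a⟩ ⟨b⟩; exact Quotient.sound (MVRel.comm a b)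
  oplus_bot := by rintro ⟨a⟩; exact Quotient.sound (MVRel.botl a)
  mvneg_mvneg := by rintro ⟨a⟩; exact Quotient.sound (MVRel.negneg a)
  mv3 := by rintro ⟨a⟩ ⟨b⟩; exact Quotient.sound (MVRel.ax3 a b)

def genMV (N : ℕ) : Fin N → FreeMV N := fun i => ⟦MVTerm.var i⟧

@[simp] lemma freeMV_oplus_mk {N : ℕ} (a b : MVTerm N) :
    (oplus (⟦a⟧ : FreeMV N) ⟦b⟧) = ⟦MVTerm.op a b⟧ := rfl
@[simp] lemma freeMV_neg_mk {N : ℕ} (a : MVTerm N) :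
    (mvneg (⟦a⟧ : FreeMV N)) = ⟦MVTerm.ng a⟧ := rfl
@[simp] lemma freeMV_bot {N : ℕ} : (mvbot : FreeMV N) = ⟦MVTerm.bt⟧ := rfl

/-- Evaluation homomorphism from the free algebra. -/
def evalQ {N : ℕ} {M : Type} [MValg M] (v : Fin N → M) : FreeMV N → M :=
  Quotient.lift (evalT v) (fun _ _ h => evalT_sound v h)

lemma evalQ_hom {N : ℕ} {M : Type} [MValg M] (v : Fin N → M) : IsMVHom (evalQ v) := by
  refine ⟨?_, ?_, rfl⟩
  · rintro ⟨a⟩ ⟨b⟩; rfl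
  · rintro ⟨a⟩; rfl

@[simp] lemma evalQ_gen {N : ℕ} {M : Type} [MValg M] (v : Fin N → M) (i : Fin N) :
    evalQ v (genMV N i) = v i := rfl

lemma freeMV_isFree (N : ℕ) : IsFreeMV (FreeMV N) (Set.range (genMV N)) := by
  intro M _ f
  refine ⟨evalQ (fun i => f ⟨genMV N i, ⟨i, rfl⟩⟩), ⟨evalQ_hom _, ?_⟩, ?_⟩
  · rintro ⟨w, i, rfl⟩; rfl
  · rintro h' ⟨hhom, hagree⟩
    funext w
    induction w using Quotient.ind with | _ t => ?_
    induction t with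
    | var i => exact hagree ⟨genMV N i, ⟨i, rfl⟩⟩
    | op a b iha ihb =>
        have : (⟦MVTerm.op a b⟧ : FreeMV N) = oplus ⟦a⟧ ⟦b⟧ := rfl
        rw [this, hhom.1, iha, ihb]; rfl
    | ng a iha =>
        have : (⟦MVTerm.ng a⟧ : FreeMV N) = mvneg ⟦a⟧ := rfl
        rw [this, hhom.2.1, iha]; rfl
    | bt =>
        have : (⟦MVTerm.bt⟧ : FreeMV N) = mvbot := rfl
        rw [this, hhom.2.2]; rfl

lemma genMV_injective (N : ℕ) : Function.Injective (genMV N) := by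
  intro i j h
  have hr : MVRel N (.var i) (.var j) := Quotient.exact h
  have h2 := evalT_sound (M := Bool) (fun t => decide (t = i)) hr
  simp only [evalT, decide_eq_true_eq] at h2
  have h3 : j = i := by simpa using h2
  exact h3.symm


/-! ### Homomorphism lemmas -/

lemma IsMVHom.comp' {A B C : Type} [MValg A] [MValg B] [MValg C] {f : A → B} {g : B → C}
    (hf : IsMVHom f) (hg : IsMVHom g) : IsMVHom (g ∘ f) := by
  refine ⟨fun x y => ?_, fun x => ?_, ?_⟩ <;>
    simp [Function.comp, hf.1, hf.2.1, hf.2.2, hg.1, hg.2.1, hg.2.2]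

lemma IsMVHomToI.comp' {A B : Type} [MValg A] [MValg B] {f : A → B} {h : B → ℝ}
    (hf : IsMVHom f) (hh : IsMVHomToI h) : IsMVHomToI (fun a => h (f a)) := by
  refine ⟨fun a => hh.1 _, ?_, fun a b => ?_, fun a => ?_⟩
  · show h (f mvbot) = 0; rw [hf.2.2, hh.2.1]
  · show h (f (oplus a b)) = _; rw [hf.1, hh.2.2.1]
  · show h (f (mvneg a)) = _; rw [hf.2.1, hh.2.2.2]

/-- Lift an `IsMVHomToI` map to a hom into the subtype `UI`. -/
lemma homToI_lift {F : Type} [MValg F] {h : F → ℝ} (hh : IsMVHomToI h) :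
    IsMVHom (fun a => (⟨h a, hh.1 a⟩ : UI)) := by
  refine ⟨fun x y => ?_, fun x => ?_, ?_⟩ <;> apply Subtype.ext
  · simp [hh.2.2.1]
  · simp [hh.2.2.2]
  · simp [hh.2.1]

/-- The underlying real map of a hom into `UI` is an `IsMVHomToI`. -/
lemma homToI_of_UIhom {F : Type} [MValg F] {h : F → UI} (hh : IsMVHom h) :
    IsMVHomToI (fun a => (h a).1) := by
  refine ⟨fun a => (h a).2, ?_, fun a b => ?_, fun a => ?_⟩
  · show (h mvbot).1 = 0; rw [hh.2.2]; rfl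
  · show (h (oplus a b)).1 = _; rw [hh.1]; rfl
  · show (h (mvneg a)).1 = _; rw [hh.2.1]; rfl

/-- Two homs out of a free algebra agreeing on the generators are equal. -/
lemma free_hom_ext {F : Type} [MValg F] {X : Set F} (hF : IsFreeMV F X)
    {M : Type} [MValg M] {h1 h2 : F → M} (hh1 : IsMVHom h1) (hh2 : IsMVHom h2)
    (hagree : ∀ x : X, h1 x = h2 x) : h1 = h2 := by
  obtain ⟨h, -, huniq⟩ := hF M (fun x => h1 x)
  rw [huniq h1 ⟨hh1, fun _ => rfl⟩, huniq h2 ⟨hh2, fun x => (hagree x).symm⟩]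


/-! ### Geometry: products of coherent sets -/

lemma convex_unitCube (k : ℕ) : Convex ℝ (unitCube k) := by
  intro x hx y hy a b ha hb hab i
  have := (convex_Icc (0:ℝ) 1) (hx i) (hy i) ha hb hab
  simpa using this

lemma mcNaughton_image_subset {n k : ℕ} {g : Fin k → (Fin n → ℝ) → ℝ}
    (hg : ∀ i, IsMcNaughton (g i)) :
    ((fun x : Fin n → ℝ => fun i : Fin k => g i x) '' unitCube n) ⊆ unitCube k := by
  rintro - ⟨x, hx, rfl⟩ i
  exact (hg i).2.1 x hx

lemma coherent_subset_cube {k : ℕ} {C : Set (Fin k → ℝ)} (hC : IsCoherentSet C) :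
    C ⊆ unitCube k := by
  obtain ⟨-, n, g, hg, rfl⟩ := hC
  exact convexHull_min (mcNaughton_image_subset hg) (convex_unitCube k)

lemma unitCube_nonempty (n : ℕ) : (fun _ : Fin n => (0:ℝ)) ∈ unitCube n :=
  fun _ => ⟨le_refl _, zero_le_one⟩

lemma coherent_nonempty {k : ℕ} {C : Set (Fin k → ℝ)} (hC : IsCoherentSet C) :
    C.Nonempty := by
  obtain ⟨-, n, g, hg, rfl⟩ := hC
  exact ⟨_, subset_convexHull ℝ _ ⟨_, unitCube_nonempty n, rfl⟩⟩

/-- The linear splitting of `Fin (k + l) → ℝ`. -/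
noncomputable def splitL (k l : ℕ) : (Fin (k + l) → ℝ) ≃ₗ[ℝ] (Fin k → ℝ) × (Fin l → ℝ) where
  toFun w := (fun i => w (Fin.castAdd l i), fun j => w (Fin.natAdd k j))
  invFun p := Fin.append p.1 p.2
  map_add' w w' := rfl
  map_smul' c w := rfl
  left_inv w := Fin.append_castAdd_natAdd
  right_inv p := by
    ext t
    · simp [Fin.append_left]
    · simp [Fin.append_right]

/-- The product of two coherent sets, inside `[0,1]^(k+l)`, is coherent. -/
lemma coherent_prod {k l : ℕ} {CA : Set (Fin k → ℝ)} {CB : Set (Fin l → ℝ)}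
    (hA : IsCoherentSet CA) (hB : IsCoherentSet CB) :
    IsCoherentSet ((splitL k l) ⁻¹' (CA ×ˢ CB)) := by
  obtain ⟨hcvA, nA, gA, hgA, hCA⟩ := hA
  obtain ⟨hcvB, nB, gB, hgB, hCB⟩ := hB
  constructor
  · exact (hcvA.prod hcvB).linear_preimage (splitL k l).toLinearMap
  refine ⟨nA + nB, fun i => Fin.addCases
      (fun i x => gA i (fun t => x (Fin.castAdd nB t)))
      (fun j x => gB j (fun t => x (Fin.natAdd nA t))) i, ?_, ?_⟩
  · intro i
    refine Fin.addCases (fun i => ?_) (fun j => ?_) i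
    · simp only [Fin.addCases_left]
      obtain ⟨hc, hv, m, a, b, hpl⟩ := hgA i
      have hres : Continuous fun x : Fin (nA + nB) → ℝ => fun t => x (Fin.castAdd nB t) :=
        continuous_pi fun t => continuous_apply _
      have hmaps : Set.MapsTo (fun x : Fin (nA + nB) → ℝ => fun t => x (Fin.castAdd nB t))
          (unitCube (nA + nB)) (unitCube nA) := fun x hx t => hx _
      refine ⟨hc.comp hres.continuousOn hmaps, fun x hx => hv _ (hmaps hx), m,
        fun j => Fin.addCases (a j) 0, b, fun x hx => ?_⟩
      obtain ⟨j, hj⟩ := hpl _ (hmaps hx)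
      refine ⟨j, ?_⟩
      simp only [Fin.sum_univ_add, Fin.addCases_left, Fin.addCases_right, Pi.zero_apply,
        Int.cast_zero, zero_mul, Finset.sum_const_zero, add_zero]
      exact hj
    · simp only [Fin.addCases_right]
      obtain ⟨hc, hv, m, a, b, hpl⟩ := hgB j
      have hres : Continuous fun x : Fin (nA + nB) → ℝ => fun t => x (Fin.natAdd nA t) :=
        continuous_pi fun t => continuous_apply _
      have hmaps : Set.MapsTo (fun x : Fin (nA + nB) → ℝ => fun t => x (Fin.natAdd nA t))
          (unitCube (nA + nB)) (unitCube nB) := fun x hx t => hx _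
      refine ⟨hc.comp hres.continuousOn hmaps, fun x hx => hv _ (hmaps hx), m,
        fun j => Fin.addCases 0 (a j), b, fun x hx => ?_⟩
      obtain ⟨j', hj⟩ := hpl _ (hmaps hx)
      refine ⟨j', ?_⟩
      simp only [Fin.sum_univ_add, Fin.addCases_left, Fin.addCases_right, Pi.zero_apply,
        Int.cast_zero, zero_mul, Finset.sum_const_zero, zero_add]
      exact hj
  · -- the set equality
    have himg : ((fun x : Fin (nA + nB) → ℝ => fun i : Fin (k + l) =>
          Fin.addCases (motive := fun _ => (Fin (nA + nB) → ℝ) → ℝ)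
            (fun i x => gA i (fun t => x (Fin.castAdd nB t)))
            (fun j x => gB j (fun t => x (Fin.natAdd nA t))) i x) '' unitCube (nA + nB))
        = (splitL k l) ⁻¹'
          (((fun x : Fin nA → ℝ => fun i : Fin k => gA i x) '' unitCube nA) ×ˢ
           ((fun x : Fin nB → ℝ => fun i : Fin l => gB i x) '' unitCube nB)) := by
      ext w
      constructor
      · rintro ⟨x, hx, rfl⟩
        constructor
        · refine ⟨fun t => x (Fin.castAdd nB t), fun t => hx _, ?_⟩
          funext i
          simp [splitL, Fin.addCases_left]
        · refine ⟨fun t => x (Fin.natAdd nA t), fun t => hx _, ?_⟩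
          funext j
          simp [splitL, Fin.addCases_right]
      · rintro ⟨⟨x1, hx1, he1⟩, ⟨x2, hx2, he2⟩⟩
        refine ⟨Fin.append x1 x2, ?_, ?_⟩
        · intro t
          refine Fin.addCases (fun t => ?_) (fun t => ?_) t
          · rw [Fin.append_left]; exact hx1 t
          · rw [Fin.append_right]; exact hx2 t
        · funext i
          refine Fin.addCases (fun i => ?_) (fun i => ?_) i
          · simp only [Fin.addCases_left]
            have h1 : (fun t => Fin.append x1 x2 (Fin.castAdd nB t)) = x1 := by
              funext t; exact Fin.append_left _ _ _
            rw [h1]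
            have := congrFun he1 i
            simpa [splitL] using this
          · simp only [Fin.addCases_right]
            have h1 : (fun t => Fin.append x1 x2 (Fin.natAdd nA t)) = x2 := by
              funext t; exact Fin.append_right _ _ _
            rw [h1]
            have := congrFun he2 i
            simpa [splitL] using this
    have hpre : ∀ S : Set ((Fin k → ℝ) × (Fin l → ℝ)),
        (splitL k l) ⁻¹' S = (splitL k l).symm '' S := fun S =>
      (LinearEquiv.image_symm_eq_preimage _ _).symm
    rw [himg, hpre, hpre, hCA, hCB, ← convexHull_prod]
    have hlin : IsLinearMap ℝ (⇑(splitL k l).symm) :=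
      ⟨fun x y => map_add _ x y, fun c x => map_smul _ c x⟩
    rw [hlin.image_convexHull]

/-! ### The quotient of the free algebra by the congruence of a set -/

def congSetoid (N : ℕ) (Cs : Set (Fin N → ℝ)) : Setoid (FreeMV N) :=
  ⟨fun a b => ∀ h : FreeMV N → ℝ, IsMVHomToI h → (fun i => h (genMV N i)) ∈ Cs → h a = h b,
   fun _ _ _ _ => rfl,
   fun hab h hh hc => (hab h hh hc).symm,
   fun h1 h2 h hh hc => (h1 h hh hc).trans (h2 h hh hc)⟩

def MVQuot (N : ℕ) (Cs : Set (Fin N → ℝ)) : Type := Quotient (congSetoid N Cs)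

instance (N : ℕ) (Cs : Set (Fin N → ℝ)) : MValg (MVQuot N Cs) where
  oplus := Quotient.lift₂ (fun a b => Quotient.mk (congSetoid N Cs) (oplus a b))
    (fun a b a' b' ha hb => Quotient.sound (fun h hh hc => by
      rw [hh.2.2.1, hh.2.2.1, ha h hh hc, hb h hh hc]))
  mvneg := Quotient.lift (fun a => Quotient.mk (congSetoid N Cs) (mvneg a))
    (fun a a' ha => Quotient.sound (fun h hh hc => by
      rw [hh.2.2.2, hh.2.2.2, ha h hh hc]))
  mvbot := Quotient.mk (congSetoid N Cs) mvbot
  oplus_assoc := by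
    rintro ⟨a⟩ ⟨b⟩ ⟨c⟩; exact congrArg (Quotient.mk _) (oplus_assoc a b c)
  oplus_comm := by rintro ⟨a⟩ ⟨b⟩; exact congrArg (Quotient.mk _) (oplus_comm a b)
  oplus_bot := by rintro ⟨a⟩; exact congrArg (Quotient.mk _) (oplus_bot a)
  mvneg_mvneg := by rintro ⟨a⟩; exact congrArg (Quotient.mk _) (mvneg_mvneg a)
  mv3 := by rintro ⟨a⟩ ⟨b⟩; exact congrArg (Quotient.mk _) (mv3 a b)

def QMap (N : ℕ) (Cs : Set (Fin N → ℝ)) : FreeMV N → MVQuot N Cs :=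
  Quotient.mk (congSetoid N Cs)

lemma QMap_hom (N : ℕ) (Cs : Set (Fin N → ℝ)) : IsMVHom (QMap N Cs) := by
  refine ⟨?_, ?_, rfl⟩
  · rintro ⟨a⟩ ⟨b⟩; rfl
  · rintro ⟨a⟩; rfl

lemma QMap_surj (N : ℕ) (Cs : Set (Fin N → ℝ)) : Function.Surjective (QMap N Cs) := by
  rintro ⟨a⟩; exact ⟨a, rfl⟩

lemma QMap_eq (N : ℕ) (Cs : Set (Fin N → ℝ)) (a b : FreeMV N) :
    QMap N Cs a = QMap N Cs b ↔
      ∀ h : FreeMV N → ℝ, IsMVHomToI h → (fun i => h (genMV N i)) ∈ Cs → h a = h b :=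
  ⟨Quotient.exact, fun h => @Quotient.sound _ (congSetoid N Cs) a b h⟩

lemma MVQuot_coherent (N : ℕ) (Cs : Set (Fin N → ℝ)) (hCs : IsCoherentSet Cs) :
    IsCoherentMV (MVQuot N Cs) :=
  ⟨N, FreeMV N, inferInstance, genMV N, Cs, QMap N Cs, freeMV_isFree N, genMV_injective N,
    hCs, QMap_hom N Cs, QMap_surj N Cs, QMap_eq N Cs⟩


/-! ### Embedding a coherent algebra into a quotient of a bigger free algebra -/

lemma embed_into_quot
    {A : Type} [MValg A] {k : ℕ} {F : Type} [MValg F] {x : Fin k → F}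
    {CA : Set (Fin k → ℝ)} {q : F → A}
    (hfree : IsFreeMV F (Set.range x)) (hxinj : Function.Injective x)
    (hq : IsMVHom q) (hqsurj : Function.Surjective q)
    (hcong : ∀ a b : F, q a = q b ↔
      ∀ h : F → ℝ, IsMVHomToI h → (fun i => h (x i)) ∈ CA → h a = h b)
    {N : ℕ} {Cs : Set (Fin N → ℝ)} (hCscube : Cs ⊆ unitCube N) (ι : Fin k → Fin N)
    (hproj : ∀ w ∈ Cs, (fun i => w (ι i)) ∈ CA)
    (hext : ∀ p ∈ CA, ∃ w ∈ Cs, ∀ i, w (ι i) = p i) :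
    ∃ f : A → MVQuot N Cs, IsMVHom f ∧ Function.Injective f := by
  classical
  -- the homomorphism `φ : F → FreeMV N` sending `x i` to the generator `ι i`
  obtain ⟨φ, ⟨hφhom, hφagree⟩, -⟩ :=
    hfree (FreeMV N) (fun s => genMV N (ι s.2.choose))
  have hφx : ∀ i, φ (x i) = genMV N (ι i) := by
    intro i
    have e : x i ∈ Set.range x := ⟨i, rfl⟩
    have h1 := hφagree ⟨x i, e⟩
    have h2 : e.choose = i := hxinj e.choose_spec
    simp only at h1
    rw [h1, h2]
  -- the key transfer property
  have hkey : ∀ u v : F, q u = q v ↔ QMap N Cs (φ u) = QMap N Cs (φ v) := by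
    intro u v
    rw [hcong, QMap_eq]
    constructor
    · intro H h' hh' hc'
      have hh : IsMVHomToI (fun a => h' (φ a)) := IsMVHomToI.comp' hφhom hh'
      have hmem : (fun i => h' (φ (x i))) ∈ CA := by
        have : (fun i => h' (φ (x i))) = fun i => (fun t => h' (genMV N t)) (ι i) := by
          funext i; rw [hφx i]
        rw [this]
        exact hproj _ hc'
      exact H _ hh hmem
    · intro H h hh hmem
      obtain ⟨w, hw, hwspec⟩ := hext _ hmem
      set vI : Fin N → UI := fun t => ⟨w t, hCscube hw t⟩ with hvI
      have hUIhom : IsMVHom (evalQ vI) := evalQ_hom vI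
      have h'I : IsMVHomToI (fun z => ((evalQ vI) z).1) := homToI_of_UIhom hUIhom
      have hgens : (fun i => ((evalQ vI) (genMV N i)).1) ∈ Cs := by
        have : (fun i => ((evalQ vI) (genMV N i)).1) = w := by
          funext t; rfl
        rw [this]; exact hw
      have hval := H _ h'I hgens
      -- `evalQ vI ∘ φ` agrees with the lift of `h`
      have hlift : IsMVHom (fun a => (⟨h a, hh.1 a⟩ : UI)) := homToI_lift hh
      have hcomp : IsMVHom (fun a => evalQ vI (φ a)) := IsMVHom.comp' hφhom hUIhom
      have heq : (fun a => evalQ vI (φ a)) = (fun a => (⟨h a, hh.1 a⟩ : UI)) := by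
        refine free_hom_ext hfree hcomp hlift ?_
        rintro ⟨-, i, rfl⟩
        simp only
        rw [hφx i]
        apply Subtype.ext
        show vI (ι i) = h (x i)
        simp only [hvI]
        exact hwspec i
      have hu := congrArg Subtype.val (congrFun heq u)
      have hv := congrArg Subtype.val (congrFun heq v)
      simp only at hu hv
      rw [← hu, ← hv]
      exact hval
  -- build the embedding
  let σ : A → F := Function.surjInv hqsurj
  have hσ : ∀ a, q (σ a) = a := fun a => Function.surjInv_eq hqsurj a
  refine ⟨fun a => QMap N Cs (φ (σ a)), ⟨?_, ?_, ?_⟩, ?_⟩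
  · intro a b
    have : q (σ (oplus a b)) = q (oplus (σ a) (σ b)) := by
      rw [hσ, hq.1, hσ, hσ]
    have h2 := (hkey _ _).1 this
    show QMap N Cs (φ (σ (oplus a b))) = oplus (QMap N Cs (φ (σ a))) (QMap N Cs (φ (σ b)))
    rw [h2, hφhom.1, (QMap_hom N Cs).1]
  · intro a
    have : q (σ (mvneg a)) = q (mvneg (σ a)) := by rw [hσ, hq.2.1, hσ]
    have h2 := (hkey _ _).1 this
    show QMap N Cs (φ (σ (mvneg a))) = mvneg (QMap N Cs (φ (σ a)))
    rw [h2, hφhom.2.1, (QMap_hom N Cs).2.1]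
  · have : q (σ mvbot) = q mvbot := by rw [hσ, hq.2.2]
    have h2 := (hkey _ _).1 this
    show QMap N Cs (φ (σ mvbot)) = mvbot
    rw [h2, hφhom.2.2, (QMap_hom N Cs).2.2]
  · intro a b hab
    have := (hkey (σ a) (σ b)).2 hab
    rwa [hσ, hσ] at this


end JEP

open JEP in
/-- The class of coherent MV-algebras has the joint embedding property. -/
theorem coherent_MV_joint_embedding
    (A : Type) [MValg A] (B : Type) [MValg B]
    (hA : IsCoherentMV A) (hB : IsCoherentMV B) :
    ∃ (C : Type) (iC : MValg C) (f : A → C) (g : B → C),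
      @IsCoherentMV C iC ∧
      @IsMVHom A C inferInstance iC f ∧ Function.Injective f ∧
      @IsMVHom B C inferInstance iC g ∧ Function.Injective g := by
  obtain ⟨kA, FA, iFA, xA, CA, qA, hfreeA, hxA, hCA, hqA, hsurjA, hcongA⟩ := hA
  obtain ⟨kB, FB, iFB, xB, CB, qB, hfreeB, hxB, hCB, hqB, hsurjB, hcongB⟩ := hB
  set N := kA + kB with hN
  set Cs : Set (Fin N → ℝ) := (splitL kA kB) ⁻¹' (CA ×ˢ CB) with hCsdef
  have hCs : IsCoherentSet Cs := coherent_prod hCA hCB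
  have hCscube : Cs ⊆ unitCube N := by
    intro w hw
    intro t
    refine Fin.addCases (fun i => ?_) (fun j => ?_) t
    · exact coherent_subset_cube hCA hw.1 i
    · exact coherent_subset_cube hCB hw.2 j
  have hprojA : ∀ w ∈ Cs, (fun i => w (Fin.castAdd kB i)) ∈ CA := fun w hw => hw.1
  have hprojB : ∀ w ∈ Cs, (fun j => w (Fin.natAdd kA j)) ∈ CB := fun w hw => hw.2
  have hextA : ∀ p ∈ CA, ∃ w ∈ Cs, ∀ i, w (Fin.castAdd kB i) = p i := by
    intro p hp
    obtain ⟨c, hc⟩ := coherent_nonempty hCB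
    refine ⟨Fin.append p c, ?_, fun i => Fin.append_left _ _ _⟩
    show (splitL kA kB) (Fin.append p c) ∈ CA ×ˢ CB
    constructor
    · have h1 : (fun i => Fin.append p c (Fin.castAdd kB i)) = p := by
        funext i; exact Fin.append_left _ _ _
      show (fun i => Fin.append p c (Fin.castAdd kB i)) ∈ CA
      rw [h1]; exact hp
    · have h1 : (fun j => Fin.append p c (Fin.natAdd kA j)) = c := by
        funext j; exact Fin.append_right _ _ _
      show (fun j => Fin.append p c (Fin.natAdd kA j)) ∈ CB
      rw [h1]; exact hc
  have hextB : ∀ p ∈ CB, ∃ w ∈ Cs, ∀ j, w (Fin.natAdd kA j) = p j := by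
    intro p hp
    obtain ⟨c, hc⟩ := coherent_nonempty hCA
    refine ⟨Fin.append c p, ?_, fun j => Fin.append_right _ _ _⟩
    show (splitL kA kB) (Fin.append c p) ∈ CA ×ˢ CB
    constructor
    · have h1 : (fun i => Fin.append c p (Fin.castAdd kB i)) = c := by
        funext i; exact Fin.append_left _ _ _
      show (fun i => Fin.append c p (Fin.castAdd kB i)) ∈ CA
      rw [h1]; exact hc
    · have h1 : (fun j => Fin.append c p (Fin.natAdd kA j)) = p := by
        funext j; exact Fin.append_right _ _ _
      show (fun j => Fin.append c p (Fin.natAdd kA j)) ∈ CB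
      rw [h1]; exact hp
  obtain ⟨f, hfhom, hfinj⟩ :=
    @embed_into_quot A _ kA FA iFA xA CA qA hfreeA hxA hqA hsurjA hcongA N Cs hCscube
      (Fin.castAdd kB) hprojA hextA
  obtain ⟨g, hghom, hginj⟩ :=
    @embed_into_quot B _ kB FB iFB xB CB qB hfreeB hxB hqB hsurjB hcongB N Cs hCscube
      (Fin.natAdd kA) hprojB hextB
  exact ⟨MVQuot N Cs, inferInstance, f, g, MVQuot_coherent N Cs hCs, hfhom, hfinj,
    hghom, hginj⟩
end
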